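/- arXiv:1910.11053 — 2 statements merged into one kernel-verified Lean document; each statement's English description precedes it below -/
import Mathlib

section
/- Let X, U, Y be complex Hilbert spaces and let Σ = (A,B,C,D) be a passive system with transfer function θ(z) = D + z·C(I − zA)⁻¹B. Then the Schur kernel of θ is positive semidefinite on the open unit disk: for every n ≥ 1, every choice of points z₁,…,zₙ in the open unit disk and every choice of vectors y₁,…,yₙ ∈ Y, the number ∑_{i,j=1}^{n} (1 − zᵢ·conj(zⱼ))⁻¹ · ⟨(I_Y − θ(zᵢ)∘θ(zⱼ)*) yⱼ, yᵢ⟩ is real and nonnegative. -/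
/-!
Put `gⱼ = ((1 - zⱼ A)⁻¹)* C* yⱼ` and `vⱼ = (z̄ⱼ gⱼ, yⱼ) ∈ X ⊕ Y`. The resolvent identity
`(1 - z̄ⱼ A*) gⱼ = C* yⱼ` gives `T* vⱼ = (gⱼ, θ(zⱼ)* yⱼ)`, and hence the kernel entry splits as
`⟪gᵢ, gⱼ⟫ + (1 - zᵢ z̄ⱼ)⁻¹ (⟪vᵢ, vⱼ⟫ - ⟪T* vᵢ, T* vⱼ⟫)`. The first part is a Gram matrix. For the
second, expand `(1 - zᵢ z̄ⱼ)⁻¹ = ∑ₖ (zᵢ z̄ⱼ)ᵏ`: the `k`-th term is `‖s‖² - ‖T* s‖² ≥ 0` with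
`s = ∑ᵢ z̄ᵢᵏ vᵢ`, since `T*` is a contraction.
-/

noncomputable section

open ContinuousLinearMap
open scoped ComplexOrder InnerProductSpace

variable {X U Y : Type*}
  [NormedAddCommGroup X] [InnerProductSpace ℂ X] [CompleteSpace X]
  [NormedAddCommGroup U] [InnerProductSpace ℂ U] [CompleteSpace U]
  [NormedAddCommGroup Y] [InnerProductSpace ℂ Y] [CompleteSpace Y]

/-- The system operator `T(x,u) = (Ax + Bu, Cx + Du)` as a block operator between the
Hilbert space direct sums `X ⊕₂ U` and `X ⊕₂ Y`. -/
def sysOp (A : X →L[ℂ] X) (B : U →L[ℂ] X) (C : X →L[ℂ] Y) (D : U →L[ℂ] Y) :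
    WithLp 2 (X × U) →L[ℂ] WithLp 2 (X × Y) :=
  (((WithLp.prodContinuousLinearEquiv 2 ℂ X Y).symm : (X × Y) →L[ℂ] WithLp 2 (X × Y)).comp
      ((A.comp (fst ℂ X U) + B.comp (snd ℂ X U)).prod
        (C.comp (fst ℂ X U) + D.comp (snd ℂ X U)))).comp
    ((WithLp.prodContinuousLinearEquiv 2 ℂ X U : WithLp 2 (X × U) →L[ℂ] (X × U)))

/-- The transfer function `θ(z) = D + z·C(I − zA)⁻¹B` of the system `(A,B,C,D)`. -/
def transferFn (A : X →L[ℂ] X) (B : U →L[ℂ] X) (C : X →L[ℂ] Y) (D : U →L[ℂ] Y) (z : ℂ) :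
    U →L[ℂ] Y :=
  D + z • ((C.comp (Ring.inverse (1 - z • A))).comp B)

open scoped ComplexConjugate

section Kernels

variable {ι E F : Type*} [Fintype ι]
  [NormedAddCommGroup E] [InnerProductSpace ℂ E] [NormedAddCommGroup F] [InnerProductSpace ℂ F]

lemma norm_mul_conj_lt_one {a b : ℂ} (ha : ‖a‖ < 1) (hb : ‖b‖ < 1) : ‖a * conj b‖ < 1 := by
  rw [norm_mul, Complex.norm_conj]
  nlinarith [norm_nonneg a, norm_nonneg b]

lemma inner_self_sub_inner_self_nonneg {S : E →L[ℂ] F} (hS : ‖S‖ ≤ 1) (x : E) :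
    0 ≤ ⟪x, x⟫_ℂ - ⟪S x, S x⟫_ℂ := by
  have hSx : ‖S x‖ ≤ ‖x‖ := (S.le_of_opNorm_le hS x).trans_eq (one_mul _)
  rw [inner_self_eq_norm_sq_to_K, inner_self_eq_norm_sq_to_K]
  norm_cast
  exact Complex.zero_le_real.2 (sub_nonneg.2 (pow_le_pow_left₀ (norm_nonneg _) hSx 2))

lemma sum_sum_inner_nonneg (w : ι → E) : 0 ≤ ∑ i, ∑ j, ⟪w i, w j⟫_ℂ := by
  have hsum : ∑ i, ∑ j, ⟪w i, w j⟫_ℂ = ⟪∑ i, w i, ∑ j, w j⟫_ℂ := by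
    rw [sum_inner]
    simp only [inner_sum]
  rw [hsum, inner_self_eq_norm_sq_to_K]
  positivity

lemma inner_sum_smul_sum_smul (a : ι → ℂ) (w : ι → E) :
    ⟪∑ i, a i • w i, ∑ j, a j • w j⟫_ℂ = ∑ i, ∑ j, conj (a i) * a j * ⟪w i, w j⟫_ℂ := by
  rw [sum_inner]
  refine Finset.sum_congr rfl fun i _ => ?_
  simp only [inner_sum, inner_smul_left, inner_smul_right]
  exact Finset.sum_congr rfl fun j _ => by ring

lemma sum_sum_inv_one_sub_mul_conj_mul_defect_nonneg {S : E →L[ℂ] F} (hS : ‖S‖ ≤ 1)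
    {z : ι → ℂ} (hz : ∀ i, ‖z i‖ < 1) (v : ι → E) :
    0 ≤ ∑ i, ∑ j, (1 - z i * conj (z j))⁻¹ * (⟪v i, v j⟫_ℂ - ⟪S (v i), S (v j)⟫_ℂ) := by
  have hgeom : ∀ i j,
      HasSum (fun k : ℕ => (z i * conj (z j)) ^ k * (⟪v i, v j⟫_ℂ - ⟪S (v i), S (v j)⟫_ℂ))
        ((1 - z i * conj (z j))⁻¹ * (⟪v i, v j⟫_ℂ - ⟪S (v i), S (v j)⟫_ℂ)) := fun i j =>
    (hasSum_geometric_of_norm_lt_one (norm_mul_conj_lt_one (hz i) (hz j))).mul_right _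
  refine (hasSum_sum fun i _ => hasSum_sum fun j _ => hgeom i j).nonneg fun k => ?_
  have hk : ∑ i, ∑ j, (z i * conj (z j)) ^ k * (⟪v i, v j⟫_ℂ - ⟪S (v i), S (v j)⟫_ℂ) =
      ⟪∑ i, conj (z i) ^ k • v i, ∑ j, conj (z j) ^ k • v j⟫_ℂ
        - ⟪S (∑ i, conj (z i) ^ k • v i), S (∑ j, conj (z j) ^ k • v j)⟫_ℂ := by
    simp only [map_sum, map_smul, inner_sum_smul_sum_smul, ← Finset.sum_sub_distrib, map_pow,
      Complex.conj_conj, mul_pow, mul_sub]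
  rw [hk]
  exact inner_self_sub_inner_self_nonneg hS _

end Kernels

lemma isUnit_one_sub_smul_of_norm_le_one {R : Type*} [NormedRing R] [NormedAlgebra ℂ R]
    [HasSummableGeomSeries R] {a : R} (ha : ‖a‖ ≤ 1) {z : ℂ} (hz : ‖z‖ < 1) :
    IsUnit (1 - z • a) :=
  (Units.oneSub (z • a) ((norm_smul_le z a).trans_lt
    (by nlinarith [norm_nonneg z, norm_nonneg a]))).isUnit

section PassiveSystem

variable (A : X →L[ℂ] X) (B : U →L[ℂ] X) (C : X →L[ℂ] Y) (D : U →L[ℂ] Y)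

omit [CompleteSpace X] [CompleteSpace U] [CompleteSpace Y] in
lemma sysOp_apply (w : WithLp 2 (X × U)) :
    sysOp A B C D w = WithLp.toLp 2 (A w.fst + B w.snd, C w.fst + D w.snd) := by
  simp [sysOp]

lemma adjoint_sysOp_apply (p : WithLp 2 (X × Y)) :
    adjoint (sysOp A B C D) p =
      WithLp.toLp 2 (adjoint A p.fst + adjoint C p.snd, adjoint B p.fst + adjoint D p.snd) := by
  refine ext_inner_left ℂ fun w => ?_
  simp only [adjoint_inner_right, sysOp_apply, WithLp.prod_inner_apply, WithLp.ofLp_fst,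
    WithLp.ofLp_snd, inner_add_left, inner_add_right]
  ring

omit [CompleteSpace X] [CompleteSpace U] [CompleteSpace Y] in
lemma norm_le_one_of_norm_sysOp_le_one (hpass : ‖sysOp A B C D‖ ≤ 1) : ‖A‖ ≤ 1 := by
  refine opNorm_le_bound _ zero_le_one fun x => ?_
  calc ‖A x‖ ≤ ‖sysOp A B C D (WithLp.toLp 2 (x, 0))‖ := by
        simpa [sysOp_apply] using WithLp.norm_fst_le _ (sysOp A B C D (WithLp.toLp 2 (x, 0)))
    _ ≤ 1 * ‖WithLp.toLp 2 (x, (0 : U))‖ := (sysOp A B C D).le_of_opNorm_le hpass _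
    _ = 1 * ‖x‖ := by rw [WithLp.norm_toLp_fst]

lemma adjoint_transferFn_apply (z : ℂ) (y : Y) :
    adjoint (transferFn A B C D z) y =
      adjoint D y + conj z • adjoint B (adjoint (C.comp (Ring.inverse (1 - z • A))) y) := by
  simp [transferFn, adjoint_comp, map_smulₛₗ]

lemma exists_adjoint_sysOp_apply_eq {A : X →L[ℂ] X} (hA : ‖A‖ ≤ 1) {z : ℂ} (hz : ‖z‖ < 1)
    (y : Y) : ∃ g : X, adjoint (sysOp A B C D) (WithLp.toLp 2 (conj z • g, y)) =
      WithLp.toLp 2 (g, adjoint (transferFn A B C D z) y) := by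
  set R := Ring.inverse (1 - z • A)
  have hR : (1 - conj z • adjoint A) * adjoint R = 1 := by
    simpa only [star_mul, star_one, star_sub, star_smul, star_eq_adjoint, Complex.star_def] using
      congrArg star (Ring.inverse_mul_cancel _ (isUnit_one_sub_smul_of_norm_le_one hA hz))
  refine ⟨adjoint (C.comp R) y, ?_⟩
  have hg : adjoint (C.comp R) y - conj z • adjoint A (adjoint (C.comp R) y) = adjoint C y := by
    simpa [adjoint_comp] using congrArg (fun T : X →L[ℂ] X => T (adjoint C y)) hR
  rw [adjoint_sysOp_apply, adjoint_transferFn_apply]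
  congr 2
  · rw [WithLp.toLp_fst, WithLp.toLp_snd, map_smul, ← hg]
    abel
  · rw [WithLp.toLp_fst, WithLp.toLp_snd, map_smul, add_comm]

end PassiveSystem

theorem statement1_general (A : X →L[ℂ] X) (B : U →L[ℂ] X) (C : X →L[ℂ] Y) (D : U →L[ℂ] Y)
    (hpass : ‖sysOp A B C D‖ ≤ 1)
    (n : ℕ) (z : Fin n → ℂ) (hz : ∀ i, ‖z i‖ < 1) (y : Fin n → Y) :
    0 ≤ ∑ i, ∑ j, (1 - z i * (starRingEnd ℂ) (z j))⁻¹ *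
      ⟪y i, y j - transferFn A B C D (z i)
          ((ContinuousLinearMap.adjoint (transferFn A B C D (z j))) (y j))⟫_ℂ := by
  set T := adjoint (sysOp A B C D)
  have hT : ‖T‖ ≤ 1 := by rwa [LinearIsometryEquiv.norm_map]
  choose g hg using fun j =>
    exists_adjoint_sysOp_apply_eq B C D (norm_le_one_of_norm_sysOp_le_one A B C D hpass)
      (hz j) (y j)
  set v := fun j => WithLp.toLp 2 (conj (z j) • g j, y j)
  have hkernel : ∀ i j, (1 - z i * conj (z j))⁻¹ *
      ⟪y i, y j - transferFn A B C D (z i) (adjoint (transferFn A B C D (z j)) (y j))⟫_ℂ =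
      ⟪g i, g j⟫_ℂ + (1 - z i * conj (z j))⁻¹ * (⟪v i, v j⟫_ℂ - ⟪T (v i), T (v j)⟫_ℂ) := by
    intro i j
    have hne : 1 - z i * conj (z j) ≠ 0 := sub_ne_zero.2 fun h =>
      (norm_mul_conj_lt_one (hz i) (hz j)).ne (by rw [← h, norm_one])
    rw [inner_sub_right, ← adjoint_inner_left, hg, hg]
    simp only [v, WithLp.prod_inner_apply, inner_smul_left, inner_smul_right, Complex.conj_conj]
    field_simp
    ring
  simp_rw [hkernel, Finset.sum_add_distrib]
  exact add_nonneg (sum_sum_inner_nonneg g)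
    (sum_sum_inv_one_sub_mul_conj_mul_defect_nonneg hT hz v)

theorem statement1 (A : X →L[ℂ] X) (B : U →L[ℂ] X) (C : X →L[ℂ] Y) (D : U →L[ℂ] Y)
    (hpass : ‖sysOp A B C D‖ ≤ 1)
    (n : ℕ) (hn : 1 ≤ n) (z : Fin n → ℂ) (hz : ∀ i, ‖z i‖ < 1) (y : Fin n → Y) :
    0 ≤ ∑ i, ∑ j, (1 - z i * (starRingEnd ℂ) (z j))⁻¹ *
      ⟪y i, y j - transferFn A B C D (z i)
          ((ContinuousLinearMap.adjoint (transferFn A B C D (z j))) (y j))⟫_ℂ :=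
  statement1_general A B C D hpass n z hz y

end
end

section
/- Let X, X₀, U be complex Hilbert spaces, let A : X → X, B : U → X, A₀ : X₀ → X₀, B₀ : U → X₀ be bounded linear operators, and suppose there is ε > 0 with ε·‖A‖ < 1 and ε·‖A₀‖ < 1 such that for all complex z, w with |z| < ε and |w| < ε: B*∘(I − conj(w)·A*)⁻¹∘(I − zA)⁻¹∘B = B₀*∘(I − conj(w)·A₀*)⁻¹∘(I − zA₀)⁻¹∘B₀. Then for every n ≥ 0 and all u₀,…,uₙ ∈ U: ‖∑_{k=0}^{n} Aᵏ(B uₖ)‖ = ‖∑_{k=0}^{n} A₀ᵏ(B₀ uₖ)‖. -/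
/-!
Expanding both resolvents in Neumann series, `⟪v, B*(I - w̄A*)⁻¹(I - zA)⁻¹B u⟫` is the double
power series `∑ⱼ,ₖ w̄ʲ zᵏ ⟪AʲBv, AᵏBu⟫`. Uniqueness of power-series coefficients, applied first
in `z` and then in `w̄`, shows that the hypothesis forces `⟪AʲBv, AᵏBu⟫ = ⟪A₀ʲB₀v, A₀ᵏB₀u⟫` for
all `j, k, u, v`. The vectors `AᵏBuₖ` and `A₀ᵏB₀uₖ` therefore have the same Gram matrix, so their
sums have the same norm.
-/

noncomputable section

open ContinuousLinearMap

variable {X X₀ U : Type*}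
  [NormedAddCommGroup X] [InnerProductSpace ℂ X] [CompleteSpace X]
  [NormedAddCommGroup X₀] [InnerProductSpace ℂ X₀] [CompleteSpace X₀]
  [NormedAddCommGroup U] [InnerProductSpace ℂ U] [CompleteSpace U]

section PowerSeries

variable {𝕜 : Type*} [RCLike 𝕜]

theorem hasFPowerSeriesOnBall_ofScalars_of_hasSum {a : ℕ → 𝕜} {f : 𝕜 → 𝕜} {ε : ℝ}
    (hε : 0 < ε) (ha : ∀ z : 𝕜, ‖z‖ < ε → HasSum (fun k => a k * z ^ k) (f z)) :
    HasFPowerSeriesOnBall f (FormalMultilinearSeries.ofScalars 𝕜 a) 0 (ENNReal.ofReal ε) where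
  r_le := ENNReal.le_of_forall_nnreal_lt fun r hr => by
    have hr' : ‖((r : ℝ) : 𝕜)‖ < ε := by
      simpa using (ENNReal.ofReal_lt_ofReal_iff hε).mp (by simpa using hr)
    refine FormalMultilinearSeries.le_radius_of_tendsto _ (l := 0) ?_
    simpa [FormalMultilinearSeries.ofScalars_norm] using
      (ha _ hr').summable.tendsto_atTop_zero.norm
  r_pos := ENNReal.ofReal_pos.mpr hε
  hasSum {y} hy := by
    have hy' : ‖y‖ < ε := by simpa [edist_zero_right] using hy
    simpa [FormalMultilinearSeries.ofScalars_apply_eq, mul_comm] using ha y hy'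

theorem eq_of_hasSum_mul_pow {a b : ℕ → 𝕜} {f : 𝕜 → 𝕜} {ε : ℝ} (hε : 0 < ε)
    (ha : ∀ z : 𝕜, ‖z‖ < ε → HasSum (fun k => a k * z ^ k) (f z))
    (hb : ∀ z : 𝕜, ‖z‖ < ε → HasSum (fun k => b k * z ^ k) (f z)) : a = b :=
  FormalMultilinearSeries.ofScalars_series_injective 𝕜 (E := 𝕜) <|
    (hasFPowerSeriesOnBall_ofScalars_of_hasSum hε ha).hasFPowerSeriesAt.eq_formalMultilinearSeries
      (hasFPowerSeriesOnBall_ofScalars_of_hasSum hε hb).hasFPowerSeriesAt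

theorem hasSum_apply_pow_mul_of_norm_mul_lt_one {Y : Type*} [NormedAddCommGroup Y]
    [NormedSpace 𝕜 Y] [CompleteSpace Y] (T : Y →L[𝕜] Y) (ℓ : Y →L[𝕜] 𝕜) (x : Y) {z : 𝕜}
    (hz : ‖z‖ * ‖T‖ < 1) :
    HasSum (fun k => ℓ ((T ^ k) x) * z ^ k) (ℓ (Ring.inverse (1 - z • T) x)) := by
  have hzT : ‖z • T‖ < 1 := (norm_smul_le z T).trans_lt hz
  convert (hasSum_geom_series_inverse (z • T) hzT).mapL (ℓ.comp (apply 𝕜 Y x)) using 2 with k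
  · simp [smul_pow, mul_comm]
  · rfl

end PowerSeries

theorem norm_sum_eq_of_inner_eq {𝕜 E F ι : Type*} [RCLike 𝕜] [NormedAddCommGroup E]
    [InnerProductSpace 𝕜 E] [NormedAddCommGroup F] [InnerProductSpace 𝕜 F] (s : Finset ι)
    {x : ι → E} {y : ι → F} (h : ∀ i j, inner 𝕜 (x i) (x j) = inner 𝕜 (y i) (y j)) :
    ‖∑ i ∈ s, x i‖ = ‖∑ i ∈ s, y i‖ := by
  simp only [norm_eq_sqrt_re_inner (𝕜 := 𝕜), sum_inner, inner_sum, h]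

def resolventGram (A : X →L[ℂ] X) (B : U →L[ℂ] X) (z w : ℂ) : U →L[ℂ] U :=
  ((adjoint B).comp (Ring.inverse (1 - (starRingEnd ℂ) w • adjoint A))).comp
    ((Ring.inverse (1 - z • A)).comp B)

theorem inner_adjoint_apply_adjoint_pow_apply (A : X →L[ℂ] X) (B : U →L[ℂ] X) (v : U) (x : X)
    (j : ℕ) : inner ℂ v (adjoint B ((adjoint A ^ j) x)) = inner ℂ ((A ^ j) (B v)) x := by
  rw [adjoint_inner_right, ← star_eq_adjoint, ← star_pow, star_eq_adjoint, adjoint_inner_right]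

theorem inner_pow_apply_eq_of_resolventGram_eq {A : X →L[ℂ] X} {B : U →L[ℂ] X}
    {A₀ : X₀ →L[ℂ] X₀} {B₀ : U →L[ℂ] X₀} {ε : ℝ} (hε : 0 < ε) (hA : ε * ‖A‖ < 1)
    (hA₀ : ε * ‖A₀‖ < 1)
    (h : ∀ z w : ℂ, ‖z‖ < ε → ‖w‖ < ε → resolventGram A B z w = resolventGram A₀ B₀ z w)
    (u v : U) (j k : ℕ) :
    inner ℂ ((A ^ j) (B v)) ((A ^ k) (B u)) = inner ℂ ((A₀ ^ j) (B₀ v)) ((A₀ ^ k) (B₀ u)) := by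
  have hsmall : ∀ z : ℂ, ‖z‖ < ε → ‖z‖ * ‖A‖ < 1 ∧ ‖z‖ * ‖A₀‖ < 1 := fun z hz =>
    ⟨(mul_le_mul_of_nonneg_right hz.le (norm_nonneg A)).trans_lt hA,
      (mul_le_mul_of_nonneg_right hz.le (norm_nonneg A₀)).trans_lt hA₀⟩
  have coeff_z : ∀ w : ℂ, ‖w‖ < ε →
      (fun k => inner ℂ v
        (adjoint B (Ring.inverse (1 - (starRingEnd ℂ) w • adjoint A) ((A ^ k) (B u)))))
      = fun k => inner ℂ v
        (adjoint B₀ (Ring.inverse (1 - (starRingEnd ℂ) w • adjoint A₀) ((A₀ ^ k) (B₀ u)))) := by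
    intro w hw
    refine eq_of_hasSum_mul_pow hε (f := fun z => inner ℂ v (resolventGram A B z w u)) ?_ ?_
    · intro z hz
      -- `(e :)` elaborates `e` before comparing with the goal; unifying directly times out.
      exact (hasSum_apply_pow_mul_of_norm_mul_lt_one A
        ((innerSL ℂ v).comp ((adjoint B).comp (Ring.inverse (1 - (starRingEnd ℂ) w • adjoint A))))
        (B u) (hsmall z hz).1 :)
    · intro z hz
      rw [h z w hz hw]
      exact (hasSum_apply_pow_mul_of_norm_mul_lt_one A₀
        ((innerSL ℂ v).comp ((adjoint B₀).comp (Ring.inverse (1 - (starRingEnd ℂ) w • adjoint A₀))))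
        (B₀ u) (hsmall z hz).2 :)
  have coeff_w :
      (fun j => inner ℂ v (adjoint B ((adjoint A ^ j) ((A ^ k) (B u)))))
      = fun j => inner ℂ v (adjoint B₀ ((adjoint A₀ ^ j) ((A₀ ^ k) (B₀ u)))) := by
    refine eq_of_hasSum_mul_pow hε
      (f := fun y => inner ℂ v (adjoint B (Ring.inverse (1 - y • adjoint A) ((A ^ k) (B u))))) ?_ ?_
    · intro y hy
      exact (hasSum_apply_pow_mul_of_norm_mul_lt_one (adjoint A) ((innerSL ℂ v).comp (adjoint B))
        ((A ^ k) (B u)) (by simpa using (hsmall y hy).1) :)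
    · intro y hy
      have hcoeff := congrFun (coeff_z ((starRingEnd ℂ) y) (by simpa using hy)) k
      rw [starRingEnd_self_apply] at hcoeff
      rw [hcoeff]
      exact (hasSum_apply_pow_mul_of_norm_mul_lt_one (adjoint A₀) ((innerSL ℂ v).comp (adjoint B₀))
        ((A₀ ^ k) (B₀ u)) (by simpa using (hsmall y hy).2) :)
  simpa only [inner_adjoint_apply_adjoint_pow_apply] using congrFun coeff_w j

theorem statement10 (A : X →L[ℂ] X) (B : U →L[ℂ] X)
    (A₀ : X₀ →L[ℂ] X₀) (B₀ : U →L[ℂ] X₀)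
    (ε : ℝ) (hε : 0 < ε) (hA : ε * ‖A‖ < 1) (hA₀ : ε * ‖A₀‖ < 1)
    (h : ∀ z w : ℂ, ‖z‖ < ε → ‖w‖ < ε →
      ((ContinuousLinearMap.adjoint B).comp
          (Ring.inverse (1 - (starRingEnd ℂ) w • ContinuousLinearMap.adjoint A))).comp
        ((Ring.inverse (1 - z • A)).comp B)
      = ((ContinuousLinearMap.adjoint B₀).comp
          (Ring.inverse (1 - (starRingEnd ℂ) w • ContinuousLinearMap.adjoint A₀))).comp
        ((Ring.inverse (1 - z • A₀)).comp B₀))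
    (n : ℕ) (u : Fin (n + 1) → U) :
    ‖∑ k : Fin (n + 1), (A ^ (k : ℕ)) (B (u k))‖
      = ‖∑ k : Fin (n + 1), (A₀ ^ (k : ℕ)) (B₀ (u k))‖ :=
  norm_sum_eq_of_inner_eq _ fun j k =>
    inner_pow_apply_eq_of_resolventGram_eq hε hA hA₀ h (u k) (u j) j k

end
end
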